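/- arXiv:math/0106216 — 4 statements merged into one kernel-verified Lean document; each statement's English description precedes it below -/
import Mathlib

section
/- Let F₃ be the free group on a, b, c, r = a·b·a⁻¹·b⁻¹·c, N the normal closure of r, and define u_k = (b⁻¹c)^k · a · b^k · a⁻¹ for each positive integer k. Then u_k ∈ N and the combinatorial area satisfies A(u_k) ≤ k. -/
namespace PS

abbrev F3 := FreeGroup (Fin 3)

def a : F3 := FreeGroup.of 0
def b : F3 := FreeGroup.of 1
def c : F3 := FreeGroup.of 2

def r : F3 := a * b * a⁻¹ * b⁻¹ * c

def N : Subgroup F3 := Subgroup.normalClosure {r}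

/-- Combinatorial area: least `d` such that `w` is a product of `d` conjugates of `r` or `r⁻¹`. -/
noncomputable def area (w : F3) : ℕ :=
  sInf {d | ∃ g : Fin d → F3, ∃ ε : Fin d → ℤ, (∀ i, ε i = 1 ∨ ε i = -1) ∧
    w = (List.ofFn fun i => g i * r ^ ε i * (g i)⁻¹).prod}

/-- Number of occurrences of `a^{±1}, b^{±1}` in the reduced word of `w`. -/
def abCount (w : F3) : ℕ :=
  (w.toWord.filter fun p => decide (p.1 ≠ 2)).length

/-- `(a,b)`-length: occurrences of `a^{±1}, b^{±1}` in a cyclic reduction of `w`, realized as the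
minimum of `abCount` over the conjugacy class of `w`. -/
noncomputable def abLen (w : F3) : ℕ :=
  sInf {n | ∃ g : F3, abCount (g * w * g⁻¹) = n}

end PS

namespace PS
def u (k : ℕ) : F3 := (b⁻¹ * c) ^ k * a * b ^ k * a⁻¹
end PS

namespace PS

lemma u_succ (k : ℕ) :
    u (k + 1) = (b⁻¹ * c) ^ (k + 1) * r * ((b⁻¹ * c) ^ (k + 1))⁻¹ * u k := by
  simp only [u, r, pow_succ]
  group

lemma u_eq_prod (k : ℕ) :
    u k = (List.ofFn fun i : Fin k =>
      (b⁻¹ * c) ^ (k - (i : ℕ)) * r * ((b⁻¹ * c) ^ (k - (i : ℕ)))⁻¹).prod := by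
  induction k with
  | zero => simp [u]
  | succ k ih =>
    rw [List.ofFn_succ, List.prod_cons, u_succ k, ih]
    congr 1
    refine congrArg List.prod (congrArg List.ofFn (funext fun i => ?_))
    simp [Nat.succ_sub_succ]

end PS

open PS in
theorem stmt_2 : ∀ k : ℕ, 1 ≤ k → u k ∈ N ∧ area (u k) ≤ k := by
  intro k _
  have hr : r ∈ N := Subgroup.subset_normalClosure (Set.mem_singleton r)
  constructor
  · rw [u_eq_prod]
    apply Subgroup.list_prod_mem
    intro x hx
    rw [List.mem_ofFn] at hx
    obtain ⟨i, rfl⟩ := hx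
    exact (Subgroup.normalClosure_normal).conj_mem r hr _
  · apply Nat.sInf_le
    refine ⟨fun i => (b⁻¹ * c) ^ (k - (i : ℕ)), fun _ => 1, fun _ => Or.inl rfl, ?_⟩
    simpa [zpow_one] using u_eq_prod k
end

section
/- Let F₃ be the free group on a, b, c, r = a·b·a⁻¹·b⁻¹·c, N the normal closure of r, and u_k = (b⁻¹c)^k · a · b^k · a⁻¹. Then the combinatorial area A(u_k) equals exactly k. -/
namespace PS

/-- auxiliary conjugator -/
def x : F3 := a * b⁻¹ * a⁻¹

lemma hx : b⁻¹ * c = x * r := by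
  unfold x r; group

lemma hx2 (k : ℕ) : a * b ^ k * a⁻¹ = (x ^ k)⁻¹ := by
  unfold x
  rw [conj_pow]
  group

lemma prod_formula (k : ℕ) :
    (List.ofFn fun i : Fin k => x ^ ((i : ℕ) + 1) * r * (x ^ ((i : ℕ) + 1))⁻¹).prod
      = (x * r) ^ k * (x ^ k)⁻¹ := by
  induction k with
  | zero => simp
  | succ n ih =>
    rw [List.ofFn_succ']
    simp only [List.prod_concat, Fin.coe_castSucc, Fin.val_last, ih]
    rw [pow_succ (x * r), pow_succ x]
    group

lemma u_eq (k : ℕ) :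
    u k = (List.ofFn fun i : Fin k => x ^ ((i : ℕ) + 1) * r * (x ^ ((i : ℕ) + 1))⁻¹).prod := by
  have h : (b⁻¹ * c) ^ k * a * b ^ k * a⁻¹ = (b⁻¹ * c) ^ k * (a * b ^ k * a⁻¹) := by group
  rw [prod_formula, u, h, hx2, hx]

/-- the abelianizing homomorphism counting c -/
noncomputable def φ : F3 →* Multiplicative ℤ :=
  FreeGroup.lift fun i => Multiplicative.ofAdd (if i = 2 then (1 : ℤ) else 0)

lemma φ_a : φ a = 1 := by simp [φ, a]
lemma φ_b : φ b = 1 := by simp [φ, b]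
lemma φ_c : φ c = Multiplicative.ofAdd (1 : ℤ) := by simp [φ, c]

lemma φ_r : φ r = Multiplicative.ofAdd (1 : ℤ) := by
  simp [r, map_mul, map_inv, φ_a, φ_b, φ_c]

lemma φ_u (k : ℕ) : φ (u k) = Multiplicative.ofAdd (k : ℤ) := by
  simp only [u, map_mul, map_pow, map_inv, φ_a, φ_b, φ_c]
  simp [← ofAdd_nsmul]

end PS

open PS in
theorem stmt_3 : ∀ k : ℕ, 1 ≤ k → u k ∈ N ∧ area (u k) = k := by
  intro k hk
  have hmemS : k ∈ {d | ∃ g : Fin d → F3, ∃ ε : Fin d → ℤ, (∀ i, ε i = 1 ∨ ε i = -1) ∧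
      u k = (List.ofFn fun i => g i * r ^ ε i * (g i)⁻¹).prod} := by
    refine ⟨fun i => x ^ ((i : ℕ) + 1), fun _ => 1, fun _ => Or.inl rfl, ?_⟩
    simpa [zpow_one] using u_eq k
  constructor
  · -- membership in N
    rw [u_eq k]
    apply list_prod_mem
    intro w hw
    rw [List.mem_ofFn] at hw
    obtain ⟨i, rfl⟩ := hw
    have hr : r ∈ N := Subgroup.subset_normalClosure (Set.mem_singleton r)
    exact (Subgroup.normalClosure_normal).conj_mem r hr _
  · -- area = k
    apply le_antisymm
    · exact Nat.sInf_le hmemS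
    · apply le_csInf ⟨k, hmemS⟩
      rintro d ⟨g, ε, hε, hprod⟩
      -- apply φ
      have h1 : φ (u k) = Multiplicative.ofAdd (∑ i : Fin d, ε i) := by
        rw [hprod, map_list_prod]
        rw [List.map_ofFn]
        rw [List.prod_ofFn]
        rw [ofAdd_sum]
        congr 1
        funext i
        simp [Function.comp, map_mul, map_zpow, φ_r, mul_comm, ← ofAdd_zsmul]
      rw [φ_u] at h1
      have h2 : (k : ℤ) = ∑ i : Fin d, ε i := by
        exact_mod_cast Multiplicative.ofAdd.injective h1
      have h3 : (k : ℤ) ≤ d := by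
        rw [h2]
        calc ∑ i : Fin d, ε i ≤ ∑ _i : Fin d, (1 : ℤ) := by
              apply Finset.sum_le_sum
              intro i _
              rcases hε i with h | h <;> simp [h]
          _ = d := by simp
      exact_mod_cast h3
end

section
/- Let w be a nontrivial cyclically reduced word in the free group F₃ = ⟨a,b,c⟩ lying in the normal closure N of r = a b a⁻¹ b⁻¹ c. Then w contains (as a contiguous subword of some cyclic permutation) an initial subword of length 4 of one of the ten words r₁^{±1}, ..., r₅^{±1}, where r₁,...,r₅ are the five cyclic rotations of r. -/
namespace PS
def r₁ : F3 := a * b * a⁻¹ * b⁻¹ * c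
def r₂ : F3 := b * a⁻¹ * b⁻¹ * c * a
def r₃ : F3 := a⁻¹ * b⁻¹ * c * a * b
def r₄ : F3 := b⁻¹ * c * a * b * a⁻¹
def r₅ : F3 := c * a * b * a⁻¹ * b⁻¹

/-- The ten simple conjugates of `r^{±1}`. -/
def R : List F3 := [r₁, r₂, r₃, r₄, r₅, r₁⁻¹, r₂⁻¹, r₃⁻¹, r₄⁻¹, r₅⁻¹]
end PS

namespace CW
abbrev L3 := Fin 3 × Bool
abbrev L2 := Fin 2 × Bool
def inv3 (p : L3) : L3 := (p.1, !p.2)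
def inv2 (p : L2) : L2 := (p.1, !p.2)
def exp (l : L3) : List L2 :=
  if h : l.1.val = 2 then
    (if l.2 then [(1,true),(0,true),(1,false),(0,false)] else [(0,true),(1,true),(0,false),(1,false)])
  else [(⟨l.1.val, by omega⟩, l.2)]
abbrev St := List L3 × List L2 × Bool
def stepf (e : Bool) : List L2 → List L2 → Option (List L2)
  | rt, [] => some rt
  | [], x :: m => if e then stepf e [x] m else none
  | y :: rt, x :: m => if y = inv2 x then stepf e rt m else stepf e (x :: y :: rt) m
def trans (s : St) (l : L3) : Option St :=
  (stepf s.2.2 s.2.1 (exp l)).map fun rt' =>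
    ((l :: s.1).take 3, rt'.take 3, s.2.2 && decide (rt'.length ≤ 3))
def pieces : List (List L3) :=
  [[(0,true),(1,true),(0,false),(1,false)], [(1,true),(0,false),(1,false),(2,true)],
   [(0,false),(1,false),(2,true),(0,true)], [(1,false),(2,true),(0,true),(1,true)],
   [(2,true),(0,true),(1,true),(0,false)], [(2,false),(1,true),(0,true),(1,false)],
   [(0,false),(2,false),(1,true),(0,true)], [(1,false),(0,false),(2,false),(1,true)],
   [(0,true),(1,false),(0,false),(2,false)], [(1,true),(0,true),(1,false),(0,false)]]
def revP : List (List L3) := pieces.map List.reverse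
def allowed (s : St) (l : L3) : Prop :=
  (∀ p ∈ s.1.head?, l ≠ inv3 p) ∧ (l :: s.1).take 4 ∉ revP
instance (s : St) (l : L3) : Decidable (allowed s l) := by unfold allowed; infer_instance
def allLetters : List L3 := [(0,true),(0,false),(1,true),(1,false),(2,true),(2,false)]
def encL2 (p : L2) : Nat := p.1.val * 2 + p.2.toNat
def encL3 (p : L3) : Nat := p.1.val * 2 + p.2.toNat
def encRt (l : List L2) : Nat := l.foldr (fun x n => n * 5 + (encL2 x + 1)) 0
def encCtx (l : List L3) : Nat := l.foldr (fun x n => n * 7 + (encL3 x + 1)) 0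
def enc (s : St) : Nat := Nat.pair (encCtx s.1) (Nat.pair (encRt s.2.1) s.2.2.toNat)
def memN (n : Nat) : List Nat → Bool
  | [] => false
  | x :: xs => (n == x) || memN n xs
def S : List St := [
  ([(0,false)],[(0,false)],true),
  ([(0,false),(0,false)],[(0,false),(0,false)],true),
  ([(0,false),(0,false),(0,false)],[(0,false),(0,false),(0,false)],false),
  ([(0,false),(0,false),(0,false)],[(0,false),(0,false),(0,false)],true),
  ([(0,false),(0,false),(1,false)],[(0,false),(0,false),(1,false)],false),
  ([(0,false),(0,false),(1,false)],[(0,false),(0,false),(1,false)],true),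
  ([(0,false),(0,false),(1,true)],[(0,false),(0,false),(0,false)],false),
  ([(0,false),(0,false),(1,true)],[(0,false),(0,false),(1,true)],false),
  ([(0,false),(0,false),(1,true)],[(0,false),(0,false),(1,true)],true),
  ([(0,false),(0,false),(2,false)],[(0,false),(0,false),(1,false)],false),
  ([(0,false),(0,false),(2,true)],[(0,false),(0,false),(0,false)],false),
  ([(0,false),(1,false)],[(0,false),(1,false)],true),
  ([(0,false),(1,false),(0,false)],[(0,false),(1,false),(0,false)],false),
  ([(0,false),(1,false),(0,false)],[(0,false),(1,false),(0,false)],true),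
  ([(0,false),(1,false),(0,true)],[(0,false),(1,false),(0,true)],false),
  ([(0,false),(1,false),(0,true)],[(0,false),(1,false),(0,true)],true),
  ([(0,false),(1,false),(0,true)],[(0,false),(1,false),(1,false)],false),
  ([(0,false),(1,false),(1,false)],[(0,false),(1,false),(1,false)],false),
  ([(0,false),(1,false),(1,false)],[(0,false),(1,false),(1,false)],true),
  ([(0,false),(1,false),(2,false)],[(0,false),(1,false),(1,false)],false),
  ([(0,false),(1,false),(2,true)],[(0,false),(1,false),(0,false)],false),
  ([(0,false),(1,true)],[(0,false),(1,true)],true),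
  ([(0,false),(1,true),(0,false)],[(0,false),(1,true),(0,false)],false),
  ([(0,false),(1,true),(0,false)],[(0,false),(1,true),(0,false)],true),
  ([(0,false),(1,true),(0,true)],[(0,false),(1,true),(0,true)],false),
  ([(0,false),(1,true),(0,true)],[(0,false),(1,true),(0,true)],true),
  ([(0,false),(1,true),(0,true)],[(0,false),(1,true),(1,true)],false),
  ([(0,false),(1,true),(1,true)],[(0,false),(1,true),(0,false)],false),
  ([(0,false),(1,true),(1,true)],[(0,false),(1,true),(0,true)],false),
  ([(0,false),(1,true),(1,true)],[(0,false),(1,true),(1,true)],false),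
  ([(0,false),(1,true),(1,true)],[(0,false),(1,true),(1,true)],true),
  ([(0,false),(1,true),(2,false)],[(0,false),(0,false),(0,false)],false),
  ([(0,false),(1,true),(2,false)],[(0,false),(0,false),(0,false)],true),
  ([(0,false),(1,true),(2,false)],[(0,false),(0,false),(1,true)],false),
  ([(0,false),(1,true),(2,false)],[(0,false),(0,false),(1,true)],true),
  ([(0,false),(1,true),(2,true)],[(0,false),(1,true),(0,false)],false),
  ([(0,false),(2,false)],[(0,false),(1,false),(0,false)],false),
  ([(0,false),(2,false),(0,false)],[(0,false),(1,false),(0,false)],false),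
  ([(0,false),(2,false),(0,false)],[(0,false),(1,false),(0,false)],true),
  ([(0,false),(2,false),(0,true)],[(0,false),(1,false),(0,false)],false),
  ([(0,false),(2,false),(1,false)],[(0,false),(1,false),(0,false)],false),
  ([(0,false),(2,false),(1,true)],[(0,false),(1,false),(0,false)],false),
  ([(0,false),(2,false),(2,false)],[(0,false),(1,false),(0,false)],false),
  ([(0,false),(2,true)],[(0,false),(0,false),(1,false)],false),
  ([(0,false),(2,true),(0,false)],[(0,false),(0,false),(1,false)],false),
  ([(0,false),(2,true),(0,true)],[(0,false),(0,false),(1,false)],false),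
  ([(0,false),(2,true),(1,false)],[(0,false),(0,false),(1,false)],false),
  ([(0,false),(2,true),(1,false)],[(0,false),(0,false),(1,false)],true),
  ([(0,false),(2,true),(1,true)],[(0,false),(0,false),(1,false)],false),
  ([(0,false),(2,true),(2,true)],[(0,false),(0,false),(1,false)],false),
  ([(0,true)],[(0,true)],true),
  ([(0,true),(0,true)],[(0,true),(0,true)],true),
  ([(0,true),(0,true),(0,true)],[(0,true),(0,true),(0,true)],false),
  ([(0,true),(0,true),(0,true)],[(0,true),(0,true),(0,true)],true),
  ([(0,true),(0,true),(0,true)],[(0,true),(0,true),(1,false)],false),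
  ([(0,true),(0,true),(0,true)],[(0,true),(0,true),(1,true)],false),
  ([(0,true),(0,true),(1,false)],[(0,true),(0,true),(1,false)],false),
  ([(0,true),(0,true),(1,false)],[(0,true),(0,true),(1,false)],true),
  ([(0,true),(0,true),(1,true)],[(0,true),(0,true),(0,true)],false),
  ([(0,true),(0,true),(1,true)],[(0,true),(0,true),(1,true)],false),
  ([(0,true),(0,true),(1,true)],[(0,true),(0,true),(1,true)],true),
  ([(0,true),(0,true),(1,true)],[(0,true),(1,true)],false),
  ([(0,true),(0,true),(2,false)],[(0,true),(0,true),(1,false)],false),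
  ([(0,true),(0,true),(2,true)],[(0,true),(1,false),(0,true)],false),
  ([(0,true),(0,true),(2,true)],[(0,true),(1,false),(0,true)],true),
  ([(0,true),(0,true),(2,true)],[(0,true),(1,false),(1,false)],false),
  ([(0,true),(0,true),(2,true)],[(0,true),(1,false),(1,false)],true),
  ([(0,true),(1,false)],[(0,true),(1,false)],true),
  ([(0,true),(1,false),(0,false)],[(0,true),(1,false),(0,false)],false),
  ([(0,true),(1,false),(0,false)],[(0,true),(1,false),(0,false)],true),
  ([(0,true),(1,false),(0,true)],[(0,true),(1,false),(0,true)],false),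
  ([(0,true),(1,false),(0,true)],[(0,true),(1,false),(0,true)],true),
  ([(0,true),(1,false),(0,true)],[(0,true),(1,false),(1,false)],false),
  ([(0,true),(1,false),(1,false)],[(0,true),(1,false),(1,false)],false),
  ([(0,true),(1,false),(1,false)],[(0,true),(1,false),(1,false)],true),
  ([(0,true),(1,false),(2,false)],[(0,true),(1,false),(1,false)],false),
  ([(0,true),(1,false),(2,true)],[(0,true),(1,false),(0,false)],false),
  ([(0,true),(1,true)],[(0,true),(1,true)],true),
  ([(0,true),(1,true),(0,false)],[(0,true),(1,true),(0,false)],false),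
  ([(0,true),(1,true),(0,false)],[(0,true),(1,true),(0,false)],true),
  ([(0,true),(1,true),(0,true)],[(0,true),(0,true)],false),
  ([(0,true),(1,true),(0,true)],[(0,true),(1,true),(0,true)],false),
  ([(0,true),(1,true),(0,true)],[(0,true),(1,true),(0,true)],true),
  ([(0,true),(1,true),(0,true)],[(0,true),(1,true),(1,true)],false),
  ([(0,true),(1,true),(1,true)],[(0,true),(1,true),(0,false)],false),
  ([(0,true),(1,true),(1,true)],[(0,true),(1,true),(0,true)],false),
  ([(0,true),(1,true),(1,true)],[(0,true),(1,true),(1,true)],false),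
  ([(0,true),(1,true),(1,true)],[(0,true),(1,true),(1,true)],true),
  ([(0,true),(1,true),(2,false)],[(1,true)],false),
  ([(0,true),(1,true),(2,true)],[(0,true),(1,true),(0,false)],false),
  ([(0,true),(2,false)],[(0,true),(1,false),(0,false)],false),
  ([(0,true),(2,false),(0,false)],[(0,true),(1,false),(0,false)],false),
  ([(0,true),(2,false),(0,false)],[(0,true),(1,false),(0,false)],true),
  ([(0,true),(2,false),(0,true)],[(0,true),(1,false),(0,false)],false),
  ([(0,true),(2,false),(1,false)],[(0,true),(1,false),(0,false)],false),
  ([(0,true),(2,false),(1,true)],[(0,true),(1,false),(0,false)],false),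
  ([(0,true),(2,false),(2,false)],[(0,true),(1,false),(0,false)],false),
  ([(0,true),(2,true)],[(1,false),(0,true)],false),
  ([(0,true),(2,true),(0,false)],[(1,false),(0,true)],false),
  ([(0,true),(2,true),(0,true)],[(1,false),(0,true)],false),
  ([(0,true),(2,true),(1,false)],[(1,false),(0,true)],false),
  ([(0,true),(2,true),(1,false)],[(1,false),(0,true)],true),
  ([(0,true),(2,true),(1,false)],[(1,false),(1,false)],false),
  ([(0,true),(2,true),(1,false)],[(1,false),(1,false)],true),
  ([(0,true),(2,true),(1,true)],[(1,false),(0,true)],false),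
  ([(0,true),(2,true),(2,true)],[(1,false),(0,true)],false),
  ([(1,false)],[(1,false)],true),
  ([(1,false),(0,false)],[(1,false),(0,false)],true),
  ([(1,false),(0,false),(0,false)],[(1,false),(0,false),(0,false)],false),
  ([(1,false),(0,false),(0,false)],[(1,false),(0,false),(0,false)],true),
  ([(1,false),(0,false),(1,false)],[(1,false),(0,false),(1,false)],false),
  ([(1,false),(0,false),(1,false)],[(1,false),(0,false),(1,false)],true),
  ([(1,false),(0,false),(1,true)],[(1,false),(0,false),(0,false)],false),
  ([(1,false),(0,false),(1,true)],[(1,false),(0,false),(1,true)],false),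
  ([(1,false),(0,false),(1,true)],[(1,false),(0,false),(1,true)],true),
  ([(1,false),(0,false),(2,false)],[(1,false),(0,false),(1,false)],false),
  ([(1,false),(0,false),(2,true)],[(1,false),(0,false),(0,false)],false),
  ([(1,false),(0,true)],[(1,false),(0,true)],true),
  ([(1,false),(0,true),(0,true)],[(1,false),(0,true),(0,true)],false),
  ([(1,false),(0,true),(0,true)],[(1,false),(0,true),(0,true)],true),
  ([(1,false),(0,true),(0,true)],[(1,false),(0,true),(1,false)],false),
  ([(1,false),(0,true),(0,true)],[(1,false),(0,true),(1,true)],false),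
  ([(1,false),(0,true),(1,false)],[(1,false),(0,true),(1,false)],false),
  ([(1,false),(0,true),(1,false)],[(1,false),(0,true),(1,false)],true),
  ([(1,false),(0,true),(1,true)],[(1,false),(0,true),(0,true)],false),
  ([(1,false),(0,true),(1,true)],[(1,false),(0,true),(1,true)],false),
  ([(1,false),(0,true),(1,true)],[(1,false),(0,true),(1,true)],true),
  ([(1,false),(0,true),(2,false)],[(1,false),(0,true),(1,false)],false),
  ([(1,false),(0,true),(2,true)],[(1,false),(1,false),(0,true)],false),
  ([(1,false),(0,true),(2,true)],[(1,false),(1,false),(0,true)],true),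
  ([(1,false),(0,true),(2,true)],[(1,false),(1,false),(1,false)],false),
  ([(1,false),(0,true),(2,true)],[(1,false),(1,false),(1,false)],true),
  ([(1,false),(1,false)],[(1,false),(1,false)],true),
  ([(1,false),(1,false),(0,false)],[(1,false),(1,false),(0,false)],false),
  ([(1,false),(1,false),(0,false)],[(1,false),(1,false),(0,false)],true),
  ([(1,false),(1,false),(0,true)],[(1,false),(1,false),(0,true)],false),
  ([(1,false),(1,false),(0,true)],[(1,false),(1,false),(0,true)],true),
  ([(1,false),(1,false),(0,true)],[(1,false),(1,false),(1,false)],false),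
  ([(1,false),(1,false),(1,false)],[(1,false),(1,false),(1,false)],false),
  ([(1,false),(1,false),(1,false)],[(1,false),(1,false),(1,false)],true),
  ([(1,false),(1,false),(2,false)],[(1,false),(1,false),(1,false)],false),
  ([(1,false),(1,false),(2,true)],[(1,false),(1,false),(0,false)],false),
  ([(1,false),(2,false)],[(1,false),(1,false),(0,false)],false),
  ([(1,false),(2,false),(0,false)],[(1,false),(1,false),(0,false)],false),
  ([(1,false),(2,false),(0,false)],[(1,false),(1,false),(0,false)],true),
  ([(1,false),(2,false),(0,true)],[(1,false),(1,false),(0,false)],false),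
  ([(1,false),(2,false),(1,false)],[(1,false),(1,false),(0,false)],false),
  ([(1,false),(2,false),(1,true)],[(1,false),(1,false),(0,false)],false),
  ([(1,false),(2,false),(2,false)],[(1,false),(1,false),(0,false)],false),
  ([(1,false),(2,true)],[(1,false),(0,false),(1,false)],false),
  ([(1,false),(2,true),(0,false)],[(1,false),(0,false),(1,false)],false),
  ([(1,false),(2,true),(0,true)],[(1,false),(0,false),(1,false)],false),
  ([(1,false),(2,true),(1,false)],[(1,false),(0,false),(1,false)],false),
  ([(1,false),(2,true),(1,false)],[(1,false),(0,false),(1,false)],true),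
  ([(1,false),(2,true),(1,true)],[(1,false),(0,false),(1,false)],false),
  ([(1,false),(2,true),(2,true)],[(1,false),(0,false),(1,false)],false),
  ([(1,true)],[(1,true)],true),
  ([(1,true),(0,false)],[(1,true),(0,false)],true),
  ([(1,true),(0,false),(0,false)],[(1,true),(0,false),(0,false)],false),
  ([(1,true),(0,false),(0,false)],[(1,true),(0,false),(0,false)],true),
  ([(1,true),(0,false),(1,false)],[(1,true),(0,false),(1,false)],false),
  ([(1,true),(0,false),(1,false)],[(1,true),(0,false),(1,false)],true),
  ([(1,true),(0,false),(1,true)],[(1,true),(0,false),(0,false)],false),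
  ([(1,true),(0,false),(1,true)],[(1,true),(0,false),(1,true)],false),
  ([(1,true),(0,false),(1,true)],[(1,true),(0,false),(1,true)],true),
  ([(1,true),(0,false),(2,false)],[(1,true),(0,false),(1,false)],false),
  ([(1,true),(0,false),(2,true)],[(1,true),(0,false),(0,false)],false),
  ([(1,true),(0,true)],[(1,true),(0,true)],true),
  ([(1,true),(0,true),(0,true)],[(1,true),(0,true),(0,true)],false),
  ([(1,true),(0,true),(0,true)],[(1,true),(0,true),(0,true)],true),
  ([(1,true),(0,true),(0,true)],[(1,true),(0,true),(1,false)],false),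
  ([(1,true),(0,true),(0,true)],[(1,true),(0,true),(1,true)],false),
  ([(1,true),(0,true),(1,false)],[(1,true),(0,true),(1,false)],false),
  ([(1,true),(0,true),(1,false)],[(1,true),(0,true),(1,false)],true),
  ([(1,true),(0,true),(1,true)],[(1,true),(0,true),(0,true)],false),
  ([(1,true),(0,true),(1,true)],[(1,true),(0,true),(1,true)],false),
  ([(1,true),(0,true),(1,true)],[(1,true),(0,true),(1,true)],true),
  ([(1,true),(0,true),(1,true)],[(1,true),(1,true)],false),
  ([(1,true),(0,true),(2,false)],[(1,true),(0,true),(1,false)],false),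
  ([(1,true),(0,true),(2,true)],[(0,true)],false),
  ([(1,true),(1,true)],[(1,true),(1,true)],true),
  ([(1,true),(1,true),(0,false)],[(1,true),(1,true),(0,false)],false),
  ([(1,true),(1,true),(0,false)],[(1,true),(1,true),(0,false)],true),
  ([(1,true),(1,true),(0,true)],[(1,true),(0,true)],false),
  ([(1,true),(1,true),(0,true)],[(1,true),(1,true),(0,true)],false),
  ([(1,true),(1,true),(0,true)],[(1,true),(1,true),(0,true)],true),
  ([(1,true),(1,true),(0,true)],[(1,true),(1,true),(1,true)],false),
  ([(1,true),(1,true),(1,true)],[(1,true),(1,true),(0,false)],false),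
  ([(1,true),(1,true),(1,true)],[(1,true),(1,true),(0,true)],false),
  ([(1,true),(1,true),(1,true)],[(1,true),(1,true),(1,true)],false),
  ([(1,true),(1,true),(1,true)],[(1,true),(1,true),(1,true)],true),
  ([(1,true),(1,true),(2,false)],[(1,true),(0,false),(0,false)],false),
  ([(1,true),(1,true),(2,false)],[(1,true),(0,false),(0,false)],true),
  ([(1,true),(1,true),(2,false)],[(1,true),(0,false),(1,true)],false),
  ([(1,true),(1,true),(2,false)],[(1,true),(0,false),(1,true)],true),
  ([(1,true),(1,true),(2,true)],[(1,true),(1,true),(0,false)],false),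
  ([(1,true),(2,false)],[(0,false),(1,true)],false),
  ([(1,true),(2,false),(0,false)],[(0,false),(0,false)],false),
  ([(1,true),(2,false),(0,false)],[(0,false),(0,false)],true),
  ([(1,true),(2,false),(0,false)],[(0,false),(1,true)],false),
  ([(1,true),(2,false),(0,false)],[(0,false),(1,true)],true),
  ([(1,true),(2,false),(0,true)],[(0,false),(1,true)],false),
  ([(1,true),(2,false),(1,false)],[(0,false),(1,true)],false),
  ([(1,true),(2,false),(1,true)],[(0,false),(1,true)],false),
  ([(1,true),(2,false),(2,false)],[(0,false),(1,true)],false),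
  ([(1,true),(2,true)],[(1,true),(0,false),(1,false)],false),
  ([(1,true),(2,true),(0,false)],[(1,true),(0,false),(1,false)],false),
  ([(1,true),(2,true),(0,true)],[(1,true),(0,false),(1,false)],false),
  ([(1,true),(2,true),(1,false)],[(1,true),(0,false),(1,false)],false),
  ([(1,true),(2,true),(1,false)],[(1,true),(0,false),(1,false)],true),
  ([(1,true),(2,true),(1,true)],[(1,true),(0,false),(1,false)],false),
  ([(1,true),(2,true),(2,true)],[(1,true),(0,false),(1,false)],false),
  ([(2,false)],[(1,false),(0,false),(1,true)],false),
  ([(2,false),(0,false)],[(1,false),(0,false),(1,true)],true),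
  ([(2,false),(0,false),(0,false)],[(1,false),(0,false),(1,true)],false),
  ([(2,false),(0,false),(1,false)],[(1,false),(0,false)],true),
  ([(2,false),(0,false),(1,false)],[(1,false),(0,false),(0,false)],false),
  ([(2,false),(0,false),(1,false)],[(1,false),(0,false),(0,false)],true),
  ([(2,false),(0,false),(1,false)],[(1,false),(0,false),(1,false)],false),
  ([(2,false),(0,false),(1,false)],[(1,false),(0,false),(1,false)],true),
  ([(2,false),(0,false),(1,true)],[(1,false),(0,false),(1,true)],false),
  ([(2,false),(0,false),(2,false)],[(1,false),(0,false),(0,false)],false),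
  ([(2,false),(0,false),(2,false)],[(1,false),(0,false),(0,false)],true),
  ([(2,false),(0,false),(2,true)],[(1,false),(0,false),(1,true)],false),
  ([(2,false),(0,true)],[(1,false),(0,false),(1,true)],false),
  ([(2,false),(0,true),(0,true)],[(1,false),(0,false),(1,true)],false),
  ([(2,false),(0,true),(1,false)],[(1,false),(0,false),(1,true)],false),
  ([(2,false),(0,true),(1,true)],[(1,false),(0,false),(1,true)],false),
  ([(2,false),(0,true),(2,false)],[(1,false),(0,false),(1,true)],false),
  ([(2,false),(0,true),(2,true)],[(1,false),(0,false),(1,true)],false),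
  ([(2,false),(1,false)],[(1,false),(0,false),(1,true)],false),
  ([(2,false),(1,false),(0,false)],[(1,false),(0,false),(1,true)],false),
  ([(2,false),(1,false),(0,true)],[(1,false),(0,false),(1,true)],false),
  ([(2,false),(1,false),(1,false)],[(1,false),(0,false),(1,true)],false),
  ([(2,false),(1,false),(2,false)],[(1,false),(0,false),(1,true)],false),
  ([(2,false),(1,false),(2,true)],[(1,false),(0,false),(1,true)],false),
  ([(2,false),(1,true)],[(1,false),(0,false),(1,true)],false),
  ([(2,false),(1,true),(0,false)],[(1,false),(0,false),(1,true)],false),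
  ([(2,false),(1,true),(0,true)],[(1,false),(0,false),(1,true)],false),
  ([(2,false),(1,true),(1,true)],[(1,false),(0,false),(1,true)],false),
  ([(2,false),(1,true),(2,false)],[(1,false),(0,false),(1,true)],false),
  ([(2,false),(1,true),(2,true)],[(1,false),(0,false),(1,true)],false),
  ([(2,false),(2,false)],[(1,false),(0,false),(1,true)],false),
  ([(2,false),(2,false),(0,false)],[(1,false),(0,false),(1,true)],false),
  ([(2,false),(2,false),(0,true)],[(1,false),(0,false),(1,true)],false),
  ([(2,false),(2,false),(1,false)],[(1,false),(0,false),(1,true)],false),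
  ([(2,false),(2,false),(1,true)],[(1,false),(0,false),(1,true)],false),
  ([(2,false),(2,false),(2,false)],[(1,false),(0,false),(1,true)],false),
  ([(2,true)],[(0,false),(1,false),(0,true)],false),
  ([(2,true),(0,false)],[(0,false),(1,false),(0,true)],false),
  ([(2,true),(0,false),(0,false)],[(0,false),(1,false),(0,true)],false),
  ([(2,true),(0,false),(1,false)],[(0,false),(1,false),(0,true)],false),
  ([(2,true),(0,false),(1,true)],[(0,false),(1,false),(0,true)],false),
  ([(2,true),(0,false),(2,false)],[(0,false),(1,false),(0,true)],false),
  ([(2,true),(0,false),(2,true)],[(0,false),(1,false),(0,true)],false),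
  ([(2,true),(0,true)],[(0,false),(1,false),(0,true)],false),
  ([(2,true),(0,true),(0,true)],[(0,false),(1,false),(0,true)],false),
  ([(2,true),(0,true),(1,false)],[(0,false),(1,false),(0,true)],false),
  ([(2,true),(0,true),(1,true)],[(0,false),(1,false),(0,true)],false),
  ([(2,true),(0,true),(2,false)],[(0,false),(1,false),(0,true)],false),
  ([(2,true),(0,true),(2,true)],[(0,false),(1,false),(0,true)],false),
  ([(2,true),(1,false)],[(0,false),(1,false),(0,true)],true),
  ([(2,true),(1,false),(0,false)],[(0,false),(1,false)],true),
  ([(2,true),(1,false),(0,false)],[(0,false),(1,false),(0,false)],false),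
  ([(2,true),(1,false),(0,false)],[(0,false),(1,false),(0,false)],true),
  ([(2,true),(1,false),(0,false)],[(0,false),(1,false),(1,false)],false),
  ([(2,true),(1,false),(0,false)],[(0,false),(1,false),(1,false)],true),
  ([(2,true),(1,false),(0,true)],[(0,false),(1,false),(0,true)],false),
  ([(2,true),(1,false),(1,false)],[(0,false),(1,false),(0,true)],false),
  ([(2,true),(1,false),(2,false)],[(0,false),(1,false),(0,true)],false),
  ([(2,true),(1,false),(2,true)],[(0,false),(1,false),(1,false)],false),
  ([(2,true),(1,false),(2,true)],[(0,false),(1,false),(1,false)],true),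
  ([(2,true),(1,true)],[(0,false),(1,false),(0,true)],false),
  ([(2,true),(1,true),(0,false)],[(0,false),(1,false),(0,true)],false),
  ([(2,true),(1,true),(0,true)],[(0,false),(1,false),(0,true)],false),
  ([(2,true),(1,true),(1,true)],[(0,false),(1,false),(0,true)],false),
  ([(2,true),(1,true),(2,false)],[(0,false),(1,false),(0,true)],false),
  ([(2,true),(1,true),(2,true)],[(0,false),(1,false),(0,true)],false),
  ([(2,true),(2,true)],[(0,false),(1,false),(0,true)],false),
  ([(2,true),(2,true),(0,false)],[(0,false),(1,false),(0,true)],false),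
  ([(2,true),(2,true),(0,true)],[(0,false),(1,false),(0,true)],false),
  ([(2,true),(2,true),(1,false)],[(0,false),(1,false),(0,true)],false),
  ([(2,true),(2,true),(1,true)],[(0,false),(1,false),(0,true)],false),
  ([(2,true),(2,true),(2,true)],[(0,false),(1,false),(0,true)],false)]

def SN : List Nat := [10,1857,984121,986106,44116319,44129604,984268,128641168,128663853,44116417,984366,74551,2965355,2968800,19554204,19563049,70090504,70090553,70107298,70090651,2965600,214398,4674322,4678647,26132671,26142896,217916771,4674469,26132769,217916869,217946394,984338,986323,128641238,128663923,4674567,2965320,2965369,2968814,2965418,2965467,2965516,2965565,44116207,44116256,44116305,44116354,44129639,44116403,44116501,51,24665,15256950,15264763,58614450,160174450,58614499,58629812,15257048,160174548,160199861,256248,58614597,20757446,20766559,73205446,73222559,94272,3261708,3265321,20757257,20766370,73205257,73205306,73222419,73205404,3261953,257079,5089615,5094128,24464,27625664,27636177,225180164,5089762,27625762,225180262,225210275,75920,5089860,3261673,3261722,3265335,3261771,3261820,3261869,3261918,33168,33217,33266,36854,36855,117155,117840,58022,114764,172,5339,1258943,1261188,48608941,48622886,1259090,138580190,138603735,4860903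9,1259188,33506,16257139,16265204,61340339,165946039,61340388,61356053,16257237,165946137,165971902,61340486,22015175,22024560,76422875,76440360,117673,3579737,3583522,22014986,22024371,76422686,76422735,76440220,76422833,3579982,3579702,3579751,3583536,3579800,3579849,3579898,3579947,48608829,48608878,48608927,48608976,48622921,48609025,48609123,445,8292,1416160,1418541,50979758,50994039,1416307,143760307,143784288,50979856,1416405,44539,17305716,17314037,64160216,171872216,64160265,64176286,17305814,171872314,171898535,360214,64160363,97662,361233,6002581,6007482,44230,30802630,30813731,240250130,6002728,30802728,240250228,240281229,1416377,1418758,143760377,143784358,6002826,213483,7874,7875,213532,214457,213581,213630,213679,213728,50979646,50979695,50979744,50979793,50994074,50979842,50979940,138579989,138603541,138580045,25513,1259043,1261288,48608943,48622888,138580192,1259141,1261386,138580290,138580003,138580101,138580150,138580199,138580248,138580297,138580010,138580059,138580108,138580157,138580255,138580304,138580017,138580066,138580115,138580213,138580262,138580311,138580024,138580073,138580122,138580171,138580220,138580269,19554090,19554097,19554146,19554244,19554293,19554342,19554391,19554104,19554202,19554251,19554300,19554349,19554398,19562956,74605,2965360,2968805,70090460,70107205,19554209,19554258,19554356,7009070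5,70107450,19554118,19554167,19554216,19554314,19554363,19554412,19554132,19554181,19554230,19554279,19554328,19554426]
def checkTransN (s : St) (l : L3) : Bool :=
  !decide (allowed s l) || (match trans s l with
    | some s' => memN (enc s') SN | none => false)

set_option maxRecDepth 100000 in
set_option maxHeartbeats 12000000 in
theorem closure : (S.all fun s => allLetters.all fun l => checkTransN s l) = true := by decide
set_option maxRecDepth 10000 in
theorem startClosure : (allLetters.all fun l => checkTransN ([],[],true) l) = true := by decide
set_option maxRecDepth 10000 in
set_option maxHeartbeats 1000000 in
theorem exactNE : (S.all fun s => !s.2.2 || !s.2.1.isEmpty) = true := by decide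
set_option maxRecDepth 10000 in
set_option maxHeartbeats 2000000 in
theorem SNdef : S.map enc = SN := by decide
theorem mem_allLetters : ∀ l : L3, l ∈ allLetters := by decide

/-! ### encoding injectivity -/
theorem encL2_lt (p : L2) : encL2 p < 4 := by
  rcases p with ⟨x, b⟩; simp only [encL2]; have := x.isLt; cases b <;> simp [Bool.toNat] <;> omega
theorem encL3_lt (p : L3) : encL3 p < 6 := by
  rcases p with ⟨x, b⟩; simp only [encL3]; have := x.isLt; cases b <;> simp [Bool.toNat] <;> omega
theorem encL2_inj : ∀ p q : L2, encL2 p = encL2 q → p = q := by decide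
theorem encL3_inj : ∀ p q : L3, encL3 p = encL3 q → p = q := by decide
theorem encRt_inj : ∀ l1 l2 : List L2, encRt l1 = encRt l2 → l1 = l2 := by
  intro l1
  induction l1 with
  | nil =>
    intro l2 h
    cases l2 with
    | nil => rfl
    | cons y t => simp only [encRt, List.foldr] at h; omega
  | cons x t ih =>
    intro l2 h
    cases l2 with
    | nil => simp only [encRt, List.foldr] at h; omega
    | cons y t2 =>
      simp only [encRt, List.foldr] at h
      have h1 := encL2_lt x
      have h2 := encL2_lt y
      have hx : encL2 x = encL2 y ∧
          List.foldr (fun x n => n * 5 + (encL2 x + 1)) 0 t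
            = List.foldr (fun x n => n * 5 + (encL2 x + 1)) 0 t2 := by omega
      have := encL2_inj _ _ hx.1
      have := ih t2 hx.2
      simp_all
theorem encCtx_inj : ∀ l1 l2 : List L3, encCtx l1 = encCtx l2 → l1 = l2 := by
  intro l1
  induction l1 with
  | nil =>
    intro l2 h
    cases l2 with
    | nil => rfl
    | cons y t => simp only [encCtx, List.foldr] at h; omega
  | cons x t ih =>
    intro l2 h
    cases l2 with
    | nil => simp only [encCtx, List.foldr] at h; omega
    | cons y t2 =>
      simp only [encCtx, List.foldr] at h
      have h1 := encL3_lt x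
      have h2 := encL3_lt y
      have hx : encL3 x = encL3 y ∧
          List.foldr (fun x n => n * 7 + (encL3 x + 1)) 0 t
            = List.foldr (fun x n => n * 7 + (encL3 x + 1)) 0 t2 := by omega
      have := encL3_inj _ _ hx.1
      have := ih t2 hx.2
      simp_all
theorem enc_inj : ∀ s1 s2 : St, enc s1 = enc s2 → s1 = s2 := by
  rintro ⟨c1, r1, e1⟩ ⟨c2, r2, e2⟩ h
  simp only [enc, Nat.pair_eq_pair] at h
  obtain ⟨h1, h2, h3⟩ := h
  have := encCtx_inj _ _ h1
  have := encRt_inj _ _ h2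
  have he : e1 = e2 := by cases e1 <;> cases e2 <;> simp_all [Bool.toNat]
  simp_all
theorem memN_mem : ∀ (n : Nat) (l : List Nat), memN n l = true → n ∈ l := by
  intro n l h
  induction l with
  | nil => simp [memN] at h
  | cons x xs ih =>
    simp only [memN, Bool.or_eq_true, beq_iff_eq] at h
    rcases h with h | h
    · simp [h]
    · exact List.mem_cons_of_mem _ (ih h)
theorem mem_S_of_memN {s : St} (h : memN (enc s) SN = true) : s ∈ S := by
  have := memN_mem _ _ h
  rw [← SNdef] at this
  obtain ⟨x, hx, hex⟩ := List.mem_map.mp this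
  rwa [← enc_inj _ _ hex]
end CW
namespace CW
open FreeGroup List

def Rd {α : Type*} (p q : α × Bool) : Prop := ¬(p.1 = q.1 ∧ p.2 = !q.2)

theorem chain'_reduce_eq {α : Type*} [DecidableEq α] :
    ∀ {L : List (α × Bool)}, List.Chain' Rd L → FreeGroup.reduce L = L := by
  intro L h
  induction L with
  | nil => rfl
  | cons x L ih =>
    obtain ⟨hhd, htl⟩ := List.isChain_cons.mp h
    rw [FreeGroup.reduce.cons, ih htl]
    cases L with
    | nil => rfl
    | cons hd tl =>
      have hne : ¬(x.1 = hd.1 ∧ x.2 = !hd.2) := hhd hd rfl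
      simp only [hne, if_false]

theorem reduce_eq_chain' {α : Type*} [DecidableEq α] :
    ∀ {L : List (α × Bool)}, FreeGroup.reduce L = L → List.Chain' Rd L := by
  intro L h
  induction L with
  | nil => exact List.isChain_nil
  | cons x L ih =>
    rw [FreeGroup.reduce.cons] at h
    cases hr : FreeGroup.reduce L with
    | nil =>
      rw [hr] at h
      simp only at h
      have hL : [] = L := by injection h with _ h2
      rw [← hL]
      exact List.isChain_singleton x
    | cons hd tl =>
      rw [hr] at h
      simp only at h
      by_cases hcond : x.1 = hd.1 ∧ x.2 = !hd.2
      · rw [if_pos hcond] at h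
        have hlen : (FreeGroup.reduce L).length ≤ L.length :=
          FreeGroup.Red.length_le FreeGroup.reduce.red
        rw [hr] at hlen
        have : tl.length = L.length + 1 := by rw [h]; simp
        simp only [List.length_cons] at hlen
        omega
      · rw [if_neg hcond] at h
        have hL : L = hd :: tl := by injection h with _ h2; exact h2.symm
        have hred : FreeGroup.reduce L = L := by rw [hr, hL]
        refine List.isChain_cons.mpr ⟨?_, ih hred⟩
        intro y hy
        rw [hL] at hy
        simp only [List.head?_cons, Option.mem_def, Option.some.injEq] at hy
        rw [← hy]
        exact hcond

theorem mk_ne_one {α : Type*} [DecidableEq α] {L : List (α × Bool)}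
    (hc : List.Chain' Rd L) (hne : L ≠ []) : FreeGroup.mk L ≠ 1 := by
  intro h1
  have h2 : (FreeGroup.mk L).toWord = [] := by rw [h1, FreeGroup.toWord_one]
  rw [FreeGroup.toWord_mk, chain'_reduce_eq hc] at h2
  exact hne h2

theorem stepf_sound : ∀ (m rt rt' v : List L2) (e : Bool),
    (e = true → v = []) →
    stepf e rt m = some rt' → List.Chain' Rd (v ++ rt.reverse) →
    List.Chain' Rd (v ++ rt'.reverse) ∧
      FreeGroup.mk (v ++ rt.reverse ++ m) = FreeGroup.mk (v ++ rt'.reverse) := by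
  intro m
  induction m with
  | nil =>
    intro rt rt' v e hv hs hc
    simp only [stepf, Option.some.injEq] at hs
    subst hs
    exact ⟨hc, by simp⟩
  | cons x m ih =>
    intro rt rt' v e hv hs hc
    cases rt with
    | nil =>
      simp only [stepf] at hs
      cases e with
      | false => simp at hs
      | true =>
        rw [if_pos rfl] at hs
        have hv' := hv rfl
        subst hv'
        have hc1 : List.Chain' Rd (([] : List L2) ++ [x].reverse) := by exact List.isChain_singleton x
        obtain ⟨h1, h2⟩ := ih [x] rt' [] true (fun _ => rfl) hs hc1
        refine ⟨h1, ?_⟩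
        simpa using h2
    | cons y rt0 =>
      simp only [stepf] at hs
      by_cases hxy : y = inv2 x
      · rw [if_pos hxy] at hs
        have hpre : List.Chain' Rd (v ++ rt0.reverse) :=
          hc.prefix ⟨[y], by simp⟩
        obtain ⟨h1, h2⟩ := ih rt0 rt' v e hv hs hpre
        refine ⟨h1, ?_⟩
        have hlist : v ++ (y :: rt0).reverse ++ (x :: m)
            = (v ++ rt0.reverse) ++ ((x.1, !x.2) :: (x.1, x.2) :: m) := by
          subst hxy; simp [inv2]
        have hstep : FreeGroup.mk (v ++ (y :: rt0).reverse ++ (x :: m))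
            = FreeGroup.mk ((v ++ rt0.reverse) ++ m) := by
          rw [hlist, ← FreeGroup.quot_mk_eq_mk, ← FreeGroup.quot_mk_eq_mk]
          exact Quot.sound FreeGroup.Red.Step.not_rev
        rw [hstep, ← h2]
      · rw [if_neg hxy] at hs
        have hc' : List.Chain' Rd (v ++ (x :: y :: rt0).reverse) := by
          have hl : v ++ (x :: y :: rt0).reverse = (v ++ (y :: rt0).reverse) ++ [x] := by simp
          rw [hl]
          refine List.isChain_append.mpr ⟨hc, List.isChain_singleton x, ?_⟩
          intro p hp q hq
          simp only [List.head?_cons, Option.mem_def, Option.some.injEq] at hq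
          have hgl : (v ++ (y :: rt0).reverse).getLast? = some y := by
            rw [show v ++ (y :: rt0).reverse = (v ++ rt0.reverse) ++ [y] by simp]
            exact List.getLast?_concat
          rw [hgl] at hp
          simp only [Option.mem_def, Option.some.injEq] at hp
          subst hp; subst hq
          intro ⟨e1, e2⟩
          exact hxy (Prod.ext e1 (by rw [e2]; simp [inv2]))
        obtain ⟨h1, h2⟩ := ih (x :: y :: rt0) rt' v e hv hs hc'
        refine ⟨h1, ?_⟩
        rw [← h2]
        have : v ++ (y :: rt0).reverse ++ (x :: m) = v ++ (x :: y :: rt0).reverse ++ m := by simp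
        rw [this]
end CW
namespace CW
open FreeGroup List

theorem trans_spec (s s' : St) (l : L3) (v : List L2)
    (ht : trans s l = some s') (hv : s.2.2 = true → v = []) (hv' : s.2.2 = false → v ≠ [])
    (hc : List.Chain' Rd (v ++ s.2.1.reverse)) :
    ∃ v' : List L2, (s'.2.2 = true → v' = []) ∧ (s'.2.2 = false → v' ≠ []) ∧
      List.Chain' Rd (v' ++ s'.2.1.reverse) ∧
      FreeGroup.mk (v ++ s.2.1.reverse ++ exp l) = FreeGroup.mk (v' ++ s'.2.1.reverse) ∧
      s'.1 = (l :: s.1).take 3 := by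
  unfold trans at ht
  cases hst : stepf s.2.2 s.2.1 (exp l) with
  | none => rw [hst] at ht; simp at ht
  | some rt' =>
    rw [hst] at ht
    simp only [Option.map_some, Option.some.injEq] at ht
    obtain ⟨hc2, hmk⟩ := stepf_sound (exp l) s.2.1 rt' v s.2.2 hv hst hc
    subst ht
    have hdec : rt'.reverse = (rt'.drop 3).reverse ++ (rt'.take 3).reverse := by
      rw [← List.reverse_append, List.take_append_drop]
    refine ⟨v ++ (rt'.drop 3).reverse, ?_, ?_, ?_, ?_, rfl⟩
    · intro hb
      simp only [Bool.and_eq_true, decide_eq_true_eq] at hb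
      have h1 := hv hb.1
      have h2 : rt'.drop 3 = [] := List.drop_eq_nil_of_le hb.2
      rw [h1, h2]; rfl
    · intro hb
      simp only [Bool.and_eq_false_iff] at hb
      rcases hb with hb | hb
      · have := hv' hb
        simp only [ne_eq, List.append_eq_nil_iff]
        intro ⟨h1, _⟩; exact this h1
      · have hd : rt'.drop 3 ≠ [] := by
          intro hdn
          have := List.drop_eq_nil_iff.mp hdn
          simp [this] at hb
        simp only [ne_eq, List.append_eq_nil_iff]
        intro ⟨_, h2⟩
        exact hd (by simpa using congrArg List.reverse h2)
    · rw [show (v ++ (rt'.drop 3).reverse) ++ (rt'.take 3).reverse = v ++ rt'.reverse by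
        rw [hdec]; simp]
      exact hc2
    · rw [show (v ++ (rt'.drop 3).reverse) ++ (rt'.take 3).reverse = v ++ rt'.reverse by
        rw [hdec]; simp]
      exact hmk

theorem inv_main : ∀ L : List L3, L ≠ [] → List.Chain' Rd L → (∀ p ∈ pieces, ¬ p <:+: L) →
    ∃ s ∈ S, ∃ v : List L2, s.1 = L.reverse.take 3 ∧
      (s.2.2 = true → v = []) ∧ (s.2.2 = false → v ≠ []) ∧
      List.Chain' Rd (v ++ s.2.1.reverse) ∧
      FreeGroup.mk (L.flatMap exp) = FreeGroup.mk (v ++ s.2.1.reverse) := by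
  intro L
  induction L using List.reverseRecOn with
  | nil => intro h; exact absurd rfl h
  | append_singleton M l ih =>
    intro _ hch havoid
    by_cases hM : M = []
    · subst hM
      have hck := (List.all_eq_true.mp startClosure) l (mem_allLetters l)
      unfold checkTransN at hck
      have hal : allowed ([],[],true) l := by
        refine ⟨by simp, ?_⟩
        have : ∀ l' : L3, ((l' :: ([] : List L3)).take 4) ∉ revP := by decide
        exact this l
      rw [decide_eq_true hal] at hck
      simp only [Bool.not_true, Bool.false_or] at hck
      cases htr : trans ([],[],true) l with
      | none => rw [htr] at hck; simp at hck
      | some s' =>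
        rw [htr] at hck
        have hs'S : s' ∈ S := mem_S_of_memN hck
        obtain ⟨v', hv1, hv2, hc', hmk', hctx⟩ :=
          trans_spec ([],[],true) s' l [] htr (fun _ => rfl) (by simp) (by exact List.isChain_nil)
        refine ⟨s', hs'S, v', ?_, hv1, hv2, hc', ?_⟩
        · rw [hctx]; simp
        · simpa using hmk'
    · obtain ⟨s, hsS, v, hs1, hv, hv', hc, hm⟩ :=
        ih hM (hch.prefix ⟨[l], rfl⟩)
          (fun p hp hinf => havoid p hp (hinf.trans ⟨[], [l], by simp⟩))
      obtain ⟨q, Q, hMrev⟩ := List.exists_cons_of_ne_nil (by simpa using hM : M.reverse ≠ [])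
      have hlast : M.getLast? = some q := by
        rw [← List.head?_reverse, hMrev]; rfl
      have hRd : Rd q l := by
        have hx := (List.isChain_append.mp (by simpa using hch : List.Chain' Rd (M ++ [l]))).2.2
        exact hx q hlast l rfl
      have hal : allowed s l := by
        constructor
        · intro p hp heq
          rw [hs1, hMrev] at hp
          simp only [List.take_succ_cons, List.head?_cons, Option.mem_def,
            Option.some.injEq] at hp
          subst hp
          apply hRd
          rw [heq]
          simp [inv3]
        · intro hmem
          simp only [revP, List.mem_map] at hmem
          obtain ⟨p, hp, hpe⟩ := hmem
          have hplen : p.length = 4 := by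
            have h4 : ∀ p' ∈ pieces, p'.length = 4 := by decide
            exact h4 p hp
          have hs1len : s.1.length ≤ 3 := by
            rw [hs1]; simp
          have ht4 : (l :: s.1).take 4 = l :: s.1 :=
            List.take_of_length_le (by simp; omega)
          rw [ht4] at hpe
          have hp2 : p = s.1.reverse ++ [l] := by
            have := congrArg List.reverse hpe
            simpa using this
          have hsuf : p <:+: M ++ [l] := by
            refine ⟨(M.reverse.drop 3).reverse, [], ?_⟩
            have hM3 : (M.reverse.drop 3).reverse ++ (M.reverse.take 3).reverse = M := by
              rw [← List.reverse_append, List.take_append_drop, List.reverse_reverse]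
            rw [hp2, hs1, List.append_nil, ← hM3]
            simp
          exact havoid p hp hsuf
      have hck := (List.all_eq_true.mp ((List.all_eq_true.mp closure) s hsS)) l (mem_allLetters l)
      unfold checkTransN at hck
      rw [decide_eq_true hal] at hck
      simp only [Bool.not_true, Bool.false_or] at hck
      cases htr : trans s l with
      | none => rw [htr] at hck; simp at hck
      | some s' =>
        rw [htr] at hck
        have hs'S : s' ∈ S := mem_S_of_memN hck
        obtain ⟨v', hv1, hv2, hc', hmk', hctx⟩ := trans_spec s s' l v htr hv hv' hc
        refine ⟨s', hs'S, v', ?_, hv1, hv2, hc', ?_⟩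
        · rw [hctx, hs1, List.reverse_append]
          simp only [List.reverse_cons, List.reverse_nil, List.nil_append,
            List.singleton_append, List.take_succ_cons, List.take_take]
          norm_num
        · rw [show (M ++ [l]).flatMap exp = M.flatMap exp ++ exp l by simp]
          calc FreeGroup.mk (M.flatMap exp ++ exp l)
              = FreeGroup.mk (M.flatMap exp) * FreeGroup.mk (exp l) := (FreeGroup.mul_mk).symm
            _ = FreeGroup.mk (v ++ s.2.1.reverse) * FreeGroup.mk (exp l) := by rw [hm]
            _ = FreeGroup.mk (v ++ s.2.1.reverse ++ exp l) := FreeGroup.mul_mk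
            _ = FreeGroup.mk (v' ++ s'.2.1.reverse) := hmk'
end CW
namespace CW
def fgen : Fin 3 → FreeGroup (Fin 2) :=
  ![FreeGroup.of 0, FreeGroup.of 1,
    FreeGroup.of 1 * FreeGroup.of 0 * (FreeGroup.of 1)⁻¹ * (FreeGroup.of 0)⁻¹]
def θ : FreeGroup (Fin 3) →* FreeGroup (Fin 2) := FreeGroup.lift fgen

theorem mk_tt {α : Type*} (x : α) : FreeGroup.mk [(x, true)] = FreeGroup.of x := rfl
theorem mk_ff {α : Type*} (x : α) : FreeGroup.mk [(x, false)] = (FreeGroup.of x)⁻¹ := by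
  rw [show FreeGroup.of x = FreeGroup.mk [(x, true)] from rfl, FreeGroup.inv_mk]; rfl

theorem mk_exp_tt2 : FreeGroup.mk (exp (2, true)) =
    FreeGroup.of 1 * FreeGroup.of 0 * (FreeGroup.of 1)⁻¹ * (FreeGroup.of 0)⁻¹ := by
  rw [show exp (2, true) = [((1:Fin 2),true)] ++ [((0:Fin 2),true)] ++ [((1:Fin 2),false)]
      ++ [((0:Fin 2),false)] from rfl]
  rw [← FreeGroup.mul_mk, ← FreeGroup.mul_mk, ← FreeGroup.mul_mk, mk_tt, mk_tt, mk_ff, mk_ff]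

theorem mk_exp_ff2 : FreeGroup.mk (exp (2, false)) =
    FreeGroup.of 0 * FreeGroup.of 1 * (FreeGroup.of 0)⁻¹ * (FreeGroup.of 1)⁻¹ := by
  rw [show exp (2, false) = [((0:Fin 2),true)] ++ [((1:Fin 2),true)] ++ [((0:Fin 2),false)]
      ++ [((1:Fin 2),false)] from rfl]
  rw [← FreeGroup.mul_mk, ← FreeGroup.mul_mk, ← FreeGroup.mul_mk, mk_tt, mk_tt, mk_ff, mk_ff]

theorem theta_single : ∀ p : L3, θ (FreeGroup.mk [p]) = FreeGroup.mk (exp p) := by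
  intro ⟨i, b⟩
  fin_cases i <;> cases b
  · show θ (FreeGroup.mk [((0:Fin 3), false)]) = FreeGroup.mk (exp ((0:Fin 3), false))
    rw [mk_ff, map_inv, show θ (FreeGroup.of 0) = fgen 0 from FreeGroup.lift_apply_of]
    rw [show exp (0, false) = [((0:Fin 2), false)] from rfl, mk_ff]; rfl
  · show θ (FreeGroup.mk [((0:Fin 3), true)]) = FreeGroup.mk (exp ((0:Fin 3), true))
    rw [mk_tt, show θ (FreeGroup.of 0) = fgen 0 from FreeGroup.lift_apply_of]
    rw [show exp (0, true) = [((0:Fin 2), true)] from rfl, mk_tt]; rfl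
  · show θ (FreeGroup.mk [((1:Fin 3), false)]) = FreeGroup.mk (exp ((1:Fin 3), false))
    rw [mk_ff, map_inv, show θ (FreeGroup.of 1) = fgen 1 from FreeGroup.lift_apply_of]
    rw [show exp (1, false) = [((1:Fin 2), false)] from rfl, mk_ff]; rfl
  · show θ (FreeGroup.mk [((1:Fin 3), true)]) = FreeGroup.mk (exp ((1:Fin 3), true))
    rw [mk_tt, show θ (FreeGroup.of 1) = fgen 1 from FreeGroup.lift_apply_of]
    rw [show exp (1, true) = [((1:Fin 2), true)] from rfl, mk_tt]; rfl
  · show θ (FreeGroup.mk [((2:Fin 3), false)]) = FreeGroup.mk (exp ((2:Fin 3), false))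
    rw [mk_ff, map_inv, show θ (FreeGroup.of 2) = fgen 2 from FreeGroup.lift_apply_of, mk_exp_ff2]
    rw [show fgen 2 = FreeGroup.of 1 * FreeGroup.of 0 * (FreeGroup.of 1)⁻¹ * (FreeGroup.of 0)⁻¹
      from rfl]
    group
  · show θ (FreeGroup.mk [((2:Fin 3), true)]) = FreeGroup.mk (exp ((2:Fin 3), true))
    rw [mk_tt, show θ (FreeGroup.of 2) = fgen 2 from FreeGroup.lift_apply_of, mk_exp_tt2]; rfl

theorem theta_mk : ∀ L : List L3, θ (FreeGroup.mk L) = FreeGroup.mk (L.flatMap exp) := by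
  intro L
  induction L with
  | nil =>
    show θ (FreeGroup.mk []) = FreeGroup.mk []
    rw [← @FreeGroup.one_eq_mk (Fin 3), ← @FreeGroup.one_eq_mk (Fin 2), map_one]
  | cons p L ih =>
    rw [show (p :: L) = [p] ++ L from rfl, ← FreeGroup.mul_mk, map_mul, theta_single, ih,
      FreeGroup.mul_mk]
    simp

theorem theta_r : θ PS.r = 1 := by
  simp only [PS.r, PS.a, PS.b, PS.c, map_mul, map_inv, θ, FreeGroup.lift_apply_of]
  show FreeGroup.of 0 * FreeGroup.of 1 * (FreeGroup.of 0)⁻¹ * (FreeGroup.of 1)⁻¹ *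
      (FreeGroup.of 1 * FreeGroup.of 0 * (FreeGroup.of 1)⁻¹ * (FreeGroup.of 0)⁻¹) = 1
  group

theorem theta_w_one {w : FreeGroup (Fin 3)} (hw : w ∈ PS.N) : θ w = 1 := by
  have hle : PS.N ≤ θ.ker := by
    apply Subgroup.normalClosure_le_normal
    intro x hx
    simp only [Set.mem_singleton_iff] at hx
    subst hx
    exact MonoidHom.mem_ker.mpr theta_r
  exact MonoidHom.mem_ker.mp (hle hw)

theorem pieces_from_R : ∀ p ∈ pieces, ∃ s ∈ PS.R, (FreeGroup.toWord s).take 4 = p := by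
  intro p hp
  fin_cases hp
  · exact ⟨PS.r₁, by simp [PS.R], by decide⟩
  · exact ⟨PS.r₂, by simp [PS.R], by decide⟩
  · exact ⟨PS.r₃, by simp [PS.R], by decide⟩
  · exact ⟨PS.r₄, by simp [PS.R], by decide⟩
  · exact ⟨PS.r₅, by simp [PS.R], by decide⟩
  · exact ⟨PS.r₁⁻¹, by simp [PS.R], by decide⟩
  · exact ⟨PS.r₂⁻¹, by simp [PS.R], by decide⟩
  · exact ⟨PS.r₃⁻¹, by simp [PS.R], by decide⟩
  · exact ⟨PS.r₄⁻¹, by simp [PS.R], by decide⟩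
  · exact ⟨PS.r₅⁻¹, by simp [PS.R], by decide⟩

end CW

open PS in
/-- Every nontrivial cyclically reduced word in `N` contains, as a contiguous subword of some
cyclic permutation of its reduced word, a piece of length 4, i.e. the length-4 prefix of one of
the ten words `r₁^{±1}, …, r₅^{±1}`. -/
theorem stmt_15 (w : F3) (hw : w ∈ N) (hne : w ≠ 1)
    (hcyc : ∀ g : F3, w.toWord.length ≤ (g * w * g⁻¹).toWord.length) :
    ∃ s ∈ R, ∃ n : ℕ, (FreeGroup.toWord s).take 4 <:+: w.toWord.rotate n := by
  by_contra hcon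
  push_neg at hcon
  have havoid : ∀ p ∈ CW.pieces, ¬ p <:+: w.toWord := by
    intro p hp hinf
    obtain ⟨s, hsR, hts⟩ := CW.pieces_from_R p hp
    exact hcon s hsR 0 (by rw [List.rotate_zero, hts]; exact hinf)
  have hθ : CW.θ w = 1 := CW.theta_w_one hw
  have hL : w.toWord ≠ [] := fun h => hne (FreeGroup.toWord_eq_nil_iff.mp h)
  have hch := CW.reduce_eq_chain' (FreeGroup.reduce_toWord w)
  obtain ⟨s, hsS, v, -, hv, hv', hc, hm⟩ := CW.inv_main w.toWord hL hch havoid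
  have hmk : FreeGroup.mk (w.toWord.flatMap CW.exp) = 1 := by
    rw [← CW.theta_mk, FreeGroup.mk_toWord]; exact hθ
  rw [hm] at hmk
  have hne2 : v ++ s.2.1.reverse ≠ [] := by
    cases he : s.2.2 with
    | true =>
      have hall := (List.all_eq_true.mp CW.exactNE) s hsS
      rw [he] at hall
      simp only [Bool.not_true, Bool.false_or] at hall
      intro happ
      rcases List.append_eq_nil_iff.mp happ with ⟨h1, h2⟩
      have hrt : s.2.1 = [] := by simpa using congrArg List.reverse h2
      simp [hrt] at hall
    | false =>
      intro happ
      exact hv' he (List.append_eq_nil_iff.mp happ).1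
  exact CW.mk_ne_one hc hne2 hmk
end

section
/- Let f : [0, π/2] → ℝ² be a smooth curve written in polar coordinates as f(t) = (ρ(t) cos φ(t), ρ(t) sin φ(t)) with ρ(t) bounded. Suppose u : [0, π/2] → ℝ is a function with 0 < u(φ(t)) ≤ ρ(t) for all t. Then the homotopy θ(s,t) = (((1−s)ρ(t) + s·u(φ(t))) cos φ(t), ((1−s)ρ(t) + s·u(φ(t))) sin φ(t)), s ∈ [0,1], has area ∫_{[0,1]×[0,π/2]} |θ*ω| ≤ √2 · Length(f), where ω = dx∧dy is the Euclidean area form. -/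
open Real in
/-- Case 1 of Lemma 1: for a curve `f(t) = (ρ(t)cos φ(t), ρ(t)sin φ(t))` in the (punctured)
square fundamental domain (so `ρ ≤ √2`) and `0 < u(φ(t)) ≤ ρ(t)`, the radial homotopy
`θ(s,t)` with radius `(1−s)ρ(t) + s·u(φ(t))` has area `∫ |θ*ω| ≤ √2 · Length(f)`, since
`|θ*ω| = ((1−s)ρ + s u(φ)) |u(φ) − ρ| |φ̇| ds dt` and `Length(f) = ∫ √(ρ̇² + ρ²φ̇²)`. -/
theorem stmt_17 (ρ φ u : ℝ → ℝ)
    (hρ : ContDiff ℝ 1 ρ) (hφ : ContDiff ℝ 1 φ)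
    (hbdd : ∀ t ∈ Set.Icc (0:ℝ) (π / 2), ρ t ≤ Real.sqrt 2)
    (hu : ∀ t ∈ Set.Icc (0:ℝ) (π / 2), 0 < u (φ t) ∧ u (φ t) ≤ ρ t) :
    (∫ s in (0:ℝ)..1, ∫ t in (0:ℝ)..(π / 2),
        ((1 - s) * ρ t + s * u (φ t)) * |u (φ t) - ρ t| * |deriv φ t|) ≤
      Real.sqrt 2 * ∫ t in (0:ℝ)..(π / 2),
        Real.sqrt ((deriv ρ t) ^ 2 + (ρ t) ^ 2 * (deriv φ t) ^ 2) := by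
  have hpi : (0:ℝ) ≤ π / 2 := by positivity
  set G : ℝ → ℝ := fun t => Real.sqrt 2 * Real.sqrt ((deriv ρ t) ^ 2 + (ρ t) ^ 2 * (deriv φ t) ^ 2)
    with hG
  have hcontG : Continuous G := by
    apply Continuous.mul continuous_const
    apply Real.continuous_sqrt.comp
    exact ((hρ.continuous_deriv le_rfl).pow 2).add
      (((hρ.continuous).pow 2).mul ((hφ.continuous_deriv le_rfl).pow 2))
  -- the constant bound C
  set C : ℝ := ∫ t in (0:ℝ)..(π / 2), G t with hC
  have hCeq : C = Real.sqrt 2 * ∫ t in (0:ℝ)..(π / 2),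
      Real.sqrt ((deriv ρ t) ^ 2 + (ρ t) ^ 2 * (deriv φ t) ^ 2) := by
    rw [hC, hG, intervalIntegral.integral_const_mul]
  have hCnonneg : 0 ≤ C := by
    rw [hC]
    apply intervalIntegral.integral_nonneg hpi
    intro t _
    positivity
  -- pointwise bound
  have hpt : ∀ s ∈ Set.Icc (0:ℝ) 1, ∀ t ∈ Set.Icc (0:ℝ) (π / 2),
      ((1 - s) * ρ t + s * u (φ t)) * |u (φ t) - ρ t| * |deriv φ t| ≤ G t := by
    intro s hs t ht
    obtain ⟨hu0, huρ⟩ := hu t ht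
    have hρpos : 0 < ρ t := lt_of_lt_of_le hu0 huρ
    have h1 : (1 - s) * ρ t + s * u (φ t) ≤ ρ t := by nlinarith [hs.1, hs.2]
    have h1' : 0 ≤ (1 - s) * ρ t + s * u (φ t) := by nlinarith [hs.1, hs.2]
    have h2 : |u (φ t) - ρ t| ≤ Real.sqrt 2 := by
      rw [abs_sub_comm, abs_of_nonneg (by linarith)]
      have := hbdd t ht
      linarith
    have h3 : ρ t * |deriv φ t| ≤ Real.sqrt ((deriv ρ t) ^ 2 + (ρ t) ^ 2 * (deriv φ t) ^ 2) := by
      have : ρ t * |deriv φ t| = Real.sqrt ((ρ t) ^ 2 * (deriv φ t) ^ 2) := by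
        rw [← Real.sqrt_sq_eq_abs, ← Real.sqrt_sq hρpos.le, ← Real.sqrt_mul (sq_nonneg _),
          Real.sq_sqrt (sq_nonneg _)]
      rw [this]
      apply Real.sqrt_le_sqrt
      nlinarith [sq_nonneg (deriv ρ t)]
    calc ((1 - s) * ρ t + s * u (φ t)) * |u (φ t) - ρ t| * |deriv φ t|
        ≤ (ρ t * Real.sqrt 2) * |deriv φ t| := by
          apply mul_le_mul_of_nonneg_right _ (abs_nonneg _)
          exact mul_le_mul h1 h2 (abs_nonneg _) hρpos.le
      _ = Real.sqrt 2 * (ρ t * |deriv φ t|) := by ring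
      _ ≤ G t := by
          rw [hG]
          exact mul_le_mul_of_nonneg_left h3 (Real.sqrt_nonneg 2)
  -- bound the inner integral for each s ∈ [0,1]
  have hinner : ∀ s ∈ Set.Icc (0:ℝ) 1,
      (∫ t in (0:ℝ)..(π / 2),
        ((1 - s) * ρ t + s * u (φ t)) * |u (φ t) - ρ t| * |deriv φ t|) ≤ C := by
    intro s hs
    by_cases hint : IntervalIntegrable
        (fun t => ((1 - s) * ρ t + s * u (φ t)) * |u (φ t) - ρ t| * |deriv φ t|)
        MeasureTheory.volume 0 (π / 2)
    · rw [hC]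
      apply intervalIntegral.integral_mono_on hpi hint
        (hcontG.intervalIntegrable 0 (π / 2))
      exact fun t ht => hpt s hs t ht
    · rw [intervalIntegral.integral_undef hint]
      exact hCnonneg
  -- bound the outer integral
  rw [← hCeq]
  by_cases hout : IntervalIntegrable
      (fun s => ∫ t in (0:ℝ)..(π / 2),
        ((1 - s) * ρ t + s * u (φ t)) * |u (φ t) - ρ t| * |deriv φ t|)
      MeasureTheory.volume 0 1
  · calc (∫ s in (0:ℝ)..1, ∫ t in (0:ℝ)..(π / 2),
          ((1 - s) * ρ t + s * u (φ t)) * |u (φ t) - ρ t| * |deriv φ t|)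
        ≤ ∫ _ in (0:ℝ)..1, C := by
          apply intervalIntegral.integral_mono_on zero_le_one hout
            (intervalIntegrable_const)
          exact hinner
      _ = C := by simp
  · rw [intervalIntegral.integral_undef hout]
    exact hCnonneg
end
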